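/- arXiv:0710.2396 — 2 statements merged into one kernel-verified Lean document; each statement's English description precedes it below -/
import Mathlib

section
/- Let μ, σ ∈ ℝ and suppose u ∈ U satisfies equation (1.1). If, as t ↘ 0, the restrictions u(t,·)|_{(0,1)} converge uniformly on every compact subset of (0,1) (to some function on (0,1)), then both limits lim_{t↘0} u(t,0) and lim_{t↘0} u(t,1) exist in ℝ; in particular u(t,·) converges in F as t ↘ 0. -/
/-!
Test (1.1) against an affine weight `w(x) = a + b x`. Integrating by parts, `∂_t ∫₀¹ u w` is the
flux `½ u_x w` at the endpoints plus terms bounded by `sup |u|`, and the boundary conditions turn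
`2σ` times that flux into `∂_t ((a + b) u(t,1) + a u(t,0))`. Hence
`2σ ∫₀¹ u w - ((a + b) u(t,1) + a u(t,0))` has bounded time derivative on `(0,1)` and so a limit as
`t ↘ 0`, while `∫₀¹ u w` converges by dominated convergence. The weights `1 - x` and `x` give the
limits of `u(t,0)` and `u(t,1)`; the limit in `F` is then the pointwise limit.
-/

open Set MeasureTheory Filter

/-- The sup norm `‖f‖_u = sup_{x ∈ [0,1]} |f(x)|`. -/
noncomputable def unorm (f : ℝ → ℝ) : ℝ := ⨆ x : Set.Icc (0:ℝ) 1, |f x|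

/-- Membership in the space `F`: bounded on `[0,1]` and continuous on `(0,1)`. -/
def MemF (f : ℝ → ℝ) : Prop :=
  (∃ C, ∀ x ∈ Set.Icc (0:ℝ) 1, |f x| ≤ C) ∧ ContinuousOn f (Set.Ioo 0 1)

/-- `u(t,·) → f` in `F` as `t ↘ 0`: uniform boundedness for `t ∈ (0,1]`, pointwise
convergence on `[0,1]`, and uniform convergence on compact subsets of `(0,1)`. -/
def ConvF (u : ℝ → ℝ → ℝ) (f : ℝ → ℝ) : Prop :=
  (∃ C, ∀ t ∈ Set.Ioc (0:ℝ) 1, ∀ x ∈ Set.Icc (0:ℝ) 1, |u t x| ≤ C) ∧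
  (∀ x ∈ Set.Icc (0:ℝ) 1,
    Filter.Tendsto (fun t => u t x) (nhdsWithin 0 (Set.Ioi 0)) (nhds (f x))) ∧
  (∀ K ⊆ Set.Ioo (0:ℝ) 1, IsCompact K →
    TendstoUniformlyOn (fun t x => u t x) f (nhdsWithin 0 (Set.Ioi 0)) K)

/-- time derivative `∂_t u`. -/
noncomputable def pt (u : ℝ → ℝ → ℝ) (t x : ℝ) : ℝ := deriv (fun s => u s x) t

/-- spatial derivative `∂_x u`, taken within `[0,1]` (one-sided at the boundary). -/
noncomputable def px (u : ℝ → ℝ → ℝ) (t x : ℝ) : ℝ :=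
  derivWithin (fun y => u t y) (Set.Icc 0 1) x

/-- second spatial derivative `∂_x² u`, taken within `[0,1]`. -/
noncomputable def pxx (u : ℝ → ℝ → ℝ) (t x : ℝ) : ℝ :=
  derivWithin (fun y => px u t y) (Set.Icc 0 1) x

/-- Membership in the space `U`: `C¹` in `t`, `C²` in `x` up to and including the spatial
boundary, bounded on `(0,1] × [0,1]`, with `∂_t u`, `∂_x u`, `∂_x² u` bounded on
`[T₁,T₂] × [0,1]` for all `0 < T₁ < T₂ < ∞`. -/
def MemU (u : ℝ → ℝ → ℝ) : Prop :=
  (∀ t ∈ Set.Ioi (0:ℝ), ∀ x ∈ Set.Icc (0:ℝ) 1,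
    DifferentiableAt ℝ (fun s => u s x) t ∧
    DifferentiableWithinAt ℝ (fun y => u t y) (Set.Icc 0 1) x ∧
    DifferentiableWithinAt ℝ (fun y => px u t y) (Set.Icc 0 1) x) ∧
  ContinuousOn (fun p : ℝ × ℝ => u p.1 p.2) (Set.Ioi 0 ×ˢ Set.Icc 0 1) ∧
  ContinuousOn (fun p : ℝ × ℝ => pt u p.1 p.2) (Set.Ioi 0 ×ˢ Set.Icc 0 1) ∧
  ContinuousOn (fun p : ℝ × ℝ => px u p.1 p.2) (Set.Ioi 0 ×ˢ Set.Icc 0 1) ∧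
  ContinuousOn (fun p : ℝ × ℝ => pxx u p.1 p.2) (Set.Ioi 0 ×ˢ Set.Icc 0 1) ∧
  (∃ C, ∀ t ∈ Set.Ioc (0:ℝ) 1, ∀ x ∈ Set.Icc (0:ℝ) 1, |u t x| ≤ C) ∧
  (∀ T₁ T₂ : ℝ, 0 < T₁ → T₁ < T₂ → ∃ C, ∀ t ∈ Set.Icc T₁ T₂, ∀ x ∈ Set.Icc (0:ℝ) 1,
    |pt u t x| ≤ C ∧ |px u t x| ≤ C ∧ |pxx u t x| ≤ C)

/-- `u` satisfies equation (1.1): `∂_t u = ½ ∂_x² u + μ ∂_x u` on `(0,∞) × (0,1)`, with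
`∂_t u(t,0) = -σ ∂_x u(t,0)` and `∂_t u(t,1) = σ ∂_x u(t,1)` for `t > 0`. -/
def SatEq (μ σ : ℝ) (u : ℝ → ℝ → ℝ) : Prop :=
  (∀ t ∈ Set.Ioi (0:ℝ), ∀ x ∈ Set.Ioo (0:ℝ) 1,
    pt u t x = (1/2) * pxx u t x + μ * px u t x) ∧
  (∀ t ∈ Set.Ioi (0:ℝ),
    pt u t 0 = -σ * px u t 0 ∧ pt u t 1 = σ * px u t 1)

open Topology

theorem exists_tendsto_nhdsGT_of_hasDerivAt_of_abs_le {f f' : ℝ → ℝ} {a b C : ℝ} (hab : a < b)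
    (hf : ∀ x ∈ Ioo a b, HasDerivAt f (f' x) x) (hC : ∀ x ∈ Ioo a b, |f' x| ≤ C) :
    ∃ l, Tendsto f (𝓝[>] a) (𝓝 l) := by
  have hlip : LipschitzOnWith C.toNNReal f (Ioo a b) :=
    (convex_Ioo a b).lipschitzOnWith_of_nnnorm_hasDerivWithin_le
      (fun x hx => (hf x hx).hasDerivWithinAt) fun x hx => by
        rw [← NNReal.coe_le_coe, coe_nnnorm, Real.norm_eq_abs, Real.coe_toNNReal']
        exact (hC x hx).trans (le_max_left _ _)
  obtain ⟨g, hg, hfg⟩ := hlip.extend_real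
  refine ⟨g a, ((hg.continuous.tendsto a).mono_left nhdsWithin_le_nhds).congr' ?_⟩
  filter_upwards [Ioo_mem_nhdsGT hab] with x hx using (hfg hx).symm

theorem setIntegral_Ioo_eq_sub_of_hasDerivAt {f f' : ℝ → ℝ} {a b : ℝ} (hab : a ≤ b)
    (hf : ContinuousOn f (Icc a b)) (hderiv : ∀ x ∈ Ioo a b, HasDerivAt f (f' x) x)
    (hf' : ContinuousOn f' (Icc a b)) : ∫ x in Ioo a b, f' x = f b - f a := by
  rw [← integral_Ioc_eq_integral_Ioo, ← intervalIntegral.integral_of_le hab]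
  exact intervalIntegral.integral_eq_sub_of_hasDerivAt_of_le hab hf hderiv
    (hf'.intervalIntegrable_of_Icc hab)

theorem continuousOn_slice {v : ℝ → ℝ → ℝ}
    (hv : ContinuousOn (fun p : ℝ × ℝ => v p.1 p.2) (Ioi 0 ×ˢ Icc 0 1)) {t : ℝ} (ht : 0 < t) :
    ContinuousOn (v t) (Icc 0 1) := fun x hx =>
  (hv (t, x) ⟨ht, hx⟩).comp (continuous_const.prodMk continuous_id).continuousWithinAt
    fun _ hy => ⟨ht, hy⟩

namespace MemU

variable {u : ℝ → ℝ → ℝ}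

theorem hasDerivAt_t (hU : MemU u) {t x : ℝ} (ht : 0 < t) (hx : x ∈ Icc 0 1) :
    HasDerivAt (fun s => u s x) (pt u t x) t :=
  (hU.1 t ht x hx).1.hasDerivAt

theorem hasDerivAt_x (hU : MemU u) {t x : ℝ} (ht : 0 < t) (hx : x ∈ Ioo 0 1) :
    HasDerivAt (u t) (px u t x) x :=
  (hU.1 t ht x (Ioo_subset_Icc_self hx)).2.1.hasDerivWithinAt.hasDerivAt (Icc_mem_nhds hx.1 hx.2)

theorem hasDerivAt_px (hU : MemU u) {t x : ℝ} (ht : 0 < t) (hx : x ∈ Ioo 0 1) :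
    HasDerivAt (px u t) (pxx u t x) x :=
  (hU.1 t ht x (Ioo_subset_Icc_self hx)).2.2.hasDerivWithinAt.hasDerivAt (Icc_mem_nhds hx.1 hx.2)

theorem hasDerivAt_setIntegral_mul (hU : MemU u) {w : ℝ → ℝ} (hw : ContinuousOn w (Icc 0 1))
    {t : ℝ} (ht : 0 < t) :
    HasDerivAt (fun s => ∫ x in Ioo 0 1, u s x * w x) (∫ x in Ioo 0 1, pt u t x * w x) t := by
  obtain ⟨hdiff, hcu, hcpt, -, -, -, hderiv_bdd⟩ := hU
  obtain ⟨C, hC⟩ := hderiv_bdd (t / 2) (2 * t) (by linarith) (by linarith)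
  obtain ⟨M, hM⟩ := isCompact_Icc.exists_bound_of_continuousOn hw
  have hball : Metric.ball t (t / 2) ⊆ Icc (t / 2) (2 * t) := by
    intro s hs
    rw [Metric.mem_ball, Real.dist_eq, abs_lt] at hs
    constructor <;> linarith
  have hmeas : ∀ {v : ℝ → ℝ}, ContinuousOn v (Icc 0 1) →
      AEStronglyMeasurable (fun x => v x * w x) (volume.restrict (Ioo (0:ℝ) 1)) := fun hv =>
    ((hv.mul hw).mono Ioo_subset_Icc_self).aestronglyMeasurable measurableSet_Ioo
  refine (hasDerivAt_integral_of_dominated_loc_of_deriv_le (F := fun s x => u s x * w x)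
    (F' := fun s x => pt u s x * w x) (bound := fun _ => C * M)
    (Metric.ball_mem_nhds t (half_pos ht)) ?_ ?_ (hmeas (continuousOn_slice hcpt ht)) ?_
    (integrable_const _) ?_).2
  · filter_upwards [eventually_gt_nhds ht] with s hs using hmeas (continuousOn_slice hcu hs)
  · exact (((continuousOn_slice hcu ht).mul hw).integrableOn_Icc).mono_set Ioo_subset_Icc_self
  · refine (ae_restrict_iff' measurableSet_Ioo).2 (ae_of_all _ fun x hx s hs => ?_)
    have hxI := Ioo_subset_Icc_self hx
    rw [norm_mul, Real.norm_eq_abs]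
    exact mul_le_mul (hC s (hball hs) x hxI).1 (hM x hxI) (norm_nonneg _)
      ((abs_nonneg _).trans (hC s (hball hs) x hxI).1)
  · refine (ae_restrict_iff' measurableSet_Ioo).2 (ae_of_all _ fun x hx s hs => ?_)
    exact ((hdiff s ((half_pos ht).trans_le (hball hs).1) x
      (Ioo_subset_Icc_self hx)).1.hasDerivAt).mul_const _

theorem setIntegral_pt_mul_affine {μ σ : ℝ} (hU : MemU u) (hEq : SatEq μ σ u) (a b : ℝ) {t : ℝ}
    (ht : 0 < t) :
    ∫ x in Ioo 0 1, pt u t x * (a + b * x) =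
      (px u t 1 * (a + b) - px u t 0 * a) / 2 - b / 2 * (u t 1 - u t 0)
        + μ * ((a + b) * u t 1 - a * u t 0) - μ * b * ∫ x in Ioo 0 1, u t x := by
  have hcu := continuousOn_slice hU.2.1 ht
  have hcpt := continuousOn_slice hU.2.2.1 ht
  have hw : ContinuousOn (fun x : ℝ => a + b * x) (Icc 0 1) := by fun_prop
  -- for `w = a + b x`, the flux `½ u_x w - ½ w' u + μ u w` has derivative `u_t w + μ w' u`
  have hflux := setIntegral_Ioo_eq_sub_of_hasDerivAt zero_le_one
    (f := fun x => px u t x * (a + b * x) / 2 - b / 2 * u t x + μ * (u t x * (a + b * x)))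
    (f' := fun x => pt u t x * (a + b * x) + μ * b * u t x)
    (by
      have hcpx := continuousOn_slice hU.2.2.2.1 ht
      fun_prop)
    (fun x hx => by
      have hw' : HasDerivAt (fun y : ℝ => a + b * y) b x := by
        simpa using ((hasDerivAt_id x).const_mul b).const_add a
      refine (((((hU.hasDerivAt_px ht hx).mul hw').div_const 2).sub
        ((hU.hasDerivAt_x ht hx).const_mul (b / 2))).add
          (((hU.hasDerivAt_x ht hx).mul hw').const_mul μ)).congr_deriv ?_
      rw [hEq.1 t ht x hx]
      ring)
    ((hcpt.mul hw).add (continuousOn_const.mul hcu))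
  have hint : IntegrableOn (fun x => pt u t x * (a + b * x)) (Ioo 0 1) :=
    (hcpt.mul hw).integrableOn_Icc.mono_set Ioo_subset_Icc_self
  rw [integral_add hint ((hcu.integrableOn_Icc.mono_set Ioo_subset_Icc_self).const_mul _),
    integral_const_mul] at hflux
  simp only [mul_zero, add_zero, mul_one] at hflux
  linarith

theorem tendsto_setIntegral_mul (hU : MemU u) {φ w : ℝ → ℝ}
    (hφ : ∀ x ∈ Ioo 0 1, Tendsto (fun t => u t x) (𝓝[>] 0) (𝓝 (φ x)))
    (hw : ContinuousOn w (Icc 0 1)) :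
    Tendsto (fun t => ∫ x in Ioo 0 1, u t x * w x) (𝓝[>] 0)
      (𝓝 (∫ x in Ioo 0 1, φ x * w x)) := by
  obtain ⟨-, hcu, -, -, -, ⟨C, hC⟩, -⟩ := hU
  obtain ⟨M, hM⟩ := isCompact_Icc.exists_bound_of_continuousOn hw
  refine tendsto_integral_filter_of_dominated_convergence (fun _ => C * M) ?_ ?_
    (integrable_const _) ?_
  · filter_upwards [self_mem_nhdsWithin] with t ht
    exact (((continuousOn_slice hcu ht).mul hw).mono Ioo_subset_Icc_self).aestronglyMeasurable
      measurableSet_Ioo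
  · filter_upwards [Ioc_mem_nhdsGT zero_lt_one] with t ht
    refine (ae_restrict_iff' measurableSet_Ioo).2 (ae_of_all _ fun x hx => ?_)
    have hxI := Ioo_subset_Icc_self hx
    rw [norm_mul, Real.norm_eq_abs]
    exact mul_le_mul (hC t ht x hxI) (hM x hxI) (norm_nonneg _)
      ((abs_nonneg _).trans (hC t ht x hxI))
  · exact (ae_restrict_iff' measurableSet_Ioo).2
      (ae_of_all _ fun x hx => (hφ x hx).mul_const _)

theorem hasDerivAt_weighted_sub_boundary {μ σ : ℝ} (hU : MemU u) (hEq : SatEq μ σ u) (a b : ℝ)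
    {t : ℝ} (ht : 0 < t) :
    HasDerivAt
      (fun s => 2 * σ * (∫ x in Ioo 0 1, u s x * (a + b * x)) - ((a + b) * u s 1 + a * u s 0))
      (σ * (2 * μ * (a + b) - b) * u t 1 + σ * (b - 2 * μ * a) * u t 0
        - 2 * σ * μ * b * ∫ x in Ioo 0 1, u t x) t := by
  have hI := hU.hasDerivAt_setIntegral_mul (w := fun x => a + b * x) (by fun_prop) ht
  have h₁ := hU.hasDerivAt_t ht (right_mem_Icc.2 zero_le_one)
  have h₀ := hU.hasDerivAt_t ht (left_mem_Icc.2 zero_le_one)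
  refine ((hI.const_mul (2 * σ)).sub ((h₁.const_mul (a + b)).add (h₀.const_mul a))).congr_deriv ?_
  rw [setIntegral_pt_mul_affine hU hEq a b ht, (hEq.2 t ht).1, (hEq.2 t ht).2]
  ring

theorem exists_tendsto_boundary_combination {μ σ : ℝ} {φ : ℝ → ℝ} (hU : MemU u)
    (hEq : SatEq μ σ u) (hφ : ∀ x ∈ Ioo 0 1, Tendsto (fun t => u t x) (𝓝[>] 0) (𝓝 (φ x)))
    (a b : ℝ) : ∃ l, Tendsto (fun t => (a + b) * u t 1 + a * u t 0) (𝓝[>] 0) (𝓝 l) := by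
  obtain ⟨C, hC⟩ := hU.2.2.2.2.2.1
  set c₁ := σ * (2 * μ * (a + b) - b)
  set c₀ := σ * (b - 2 * μ * a)
  set c := 2 * σ * μ * b
  have hderiv_le : ∀ t ∈ Ioo (0 : ℝ) 1, |c₁ * u t 1 + c₀ * u t 0 - c * ∫ x in Ioo 0 1, u t x|
      ≤ (|c₁| + |c₀| + |c|) * C := by
    intro t ht
    have hJ : |∫ x in Ioo 0 1, u t x| ≤ C := by
      simpa using norm_setIntegral_le_of_norm_le_const (f := u t) (μ := volume)
        measure_Ioo_lt_top fun x hx => (Real.norm_eq_abs _).trans_le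
          (hC t (Ioo_subset_Ioc_self ht) x (Ioo_subset_Icc_self hx))
    calc _ ≤ |c₁| * |u t 1| + |c₀| * |u t 0| + |c| * |∫ x in Ioo 0 1, u t x| := by
          rw [← abs_mul, ← abs_mul, ← abs_mul]
          exact (abs_sub _ _).trans (add_le_add_left (abs_add_le _ _) _)
      _ ≤ |c₁| * C + |c₀| * C + |c| * C := by
          gcongr <;> exact hC t (Ioo_subset_Ioc_self ht) _ (by simp)
      _ = _ := by ring
  obtain ⟨l, hl⟩ := exists_tendsto_nhdsGT_of_hasDerivAt_of_abs_le zero_lt_one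
    (fun t ht => hU.hasDerivAt_weighted_sub_boundary hEq a b ht.1) hderiv_le
  have hI := hU.tendsto_setIntegral_mul hφ (w := fun x => a + b * x) (by fun_prop)
  exact ⟨_, ((hI.const_mul (2 * σ)).sub hl).congr fun t => by ring⟩

end MemU

theorem ConvF.memF {u : ℝ → ℝ → ℝ} {f : ℝ → ℝ} (hf : ConvF u f)
    (hc : ∀ᶠ t in 𝓝[>] 0, ContinuousOn (u t) (Ioo 0 1)) : MemF f := by
  obtain ⟨⟨C, hC⟩, hpt, hunif⟩ := hf
  refine ⟨⟨C, fun x hx => le_of_tendsto (hpt x hx).abs ?_⟩, ?_⟩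
  · filter_upwards [Ioc_mem_nhdsGT zero_lt_one] with t ht using hC t ht x hx
  · exact ((tendstoLocallyUniformlyOn_iff_forall_isCompact isOpen_Ioo).2 hunif).continuousOn
      hc.frequently

theorem convF_limUnder {u : ℝ → ℝ → ℝ} {φ : ℝ → ℝ}
    (hbd : ∃ C, ∀ t ∈ Ioc (0:ℝ) 1, ∀ x ∈ Icc (0:ℝ) 1, |u t x| ≤ C)
    (hlim : ∀ x ∈ Icc (0:ℝ) 1, ∃ l, Tendsto (fun t => u t x) (𝓝[>] 0) (𝓝 l))
    (hconv : ∀ K ⊆ Ioo (0:ℝ) 1, IsCompact K → TendstoUniformlyOn u φ (𝓝[>] 0) K) :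
    ConvF u fun x => limUnder (𝓝[>] 0) fun t => u t x := by
  refine ⟨hbd, fun x hx => tendsto_nhds_limUnder (hlim x hx), fun K hK hKc => ?_⟩
  refine (hconv K hK hKc).congr_right fun x hx =>
    tendsto_nhds_unique (f := fun t => u t x) (l := 𝓝[>] 0) ?_ ?_
  · exact (hconv {x} (singleton_subset_iff.2 (hK hx)) isCompact_singleton).tendsto_at rfl
  · exact tendsto_nhds_limUnder (hlim x (Ioo_subset_Icc_self (hK hx)))

/-- Theorem 1.1(i): if `u ∈ U` satisfies (1.1) and `u(t,·)` converges uniformly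
on compact subsets of `(0,1)` as `t ↘ 0`, then `u(t,0)` and `u(t,1)` converge as `t ↘ 0`,
and `u(t,·)` converges in `F`. -/
theorem stmt0 (μ σ : ℝ) (u : ℝ → ℝ → ℝ) (hU : MemU u) (hEq : SatEq μ σ u)
    (φ : ℝ → ℝ)
    (hconv : ∀ K ⊆ Set.Ioo (0:ℝ) 1, IsCompact K →
      TendstoUniformlyOn (fun t x => u t x) φ (nhdsWithin 0 (Set.Ioi 0)) K) :
    (∃ l₀ : ℝ, Filter.Tendsto (fun t => u t 0) (nhdsWithin 0 (Set.Ioi 0)) (nhds l₀)) ∧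
    (∃ l₁ : ℝ, Filter.Tendsto (fun t => u t 1) (nhdsWithin 0 (Set.Ioi 0)) (nhds l₁)) ∧
    (∃ f : ℝ → ℝ, MemF f ∧ ConvF u f) := by
  have hφ : ∀ x ∈ Ioo (0:ℝ) 1, Tendsto (fun t => u t x) (𝓝[>] 0) (𝓝 (φ x)) := fun x hx =>
    (hconv {x} (singleton_subset_iff.2 hx) isCompact_singleton).tendsto_at rfl
  have h₀ : ∃ l, Tendsto (fun t => u t 0) (𝓝[>] 0) (𝓝 l) := by
    simpa using hU.exists_tendsto_boundary_combination hEq hφ 1 (-1)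
  have h₁ : ∃ l, Tendsto (fun t => u t 1) (𝓝[>] 0) (𝓝 l) := by
    simpa using hU.exists_tendsto_boundary_combination hEq hφ 0 1
  have hlim : ∀ x ∈ Icc (0:ℝ) 1, ∃ l, Tendsto (fun t => u t x) (𝓝[>] 0) (𝓝 l) := by
    rintro x ⟨hx₀, hx₁⟩
    rcases hx₀.eq_or_lt with rfl | hx₀
    · exact h₀
    rcases hx₁.eq_or_lt with rfl | hx₁
    · exact h₁
    · exact ⟨_, hφ x ⟨hx₀, hx₁⟩⟩
  have hF := convF_limUnder hU.2.2.2.2.2.1 hlim hconv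
  refine ⟨h₀, h₁, _, hF.memF ?_, hF⟩
  filter_upwards [self_mem_nhdsWithin] with t ht
  exact (continuousOn_slice hU.2.1 ht).mono Ioo_subset_Icc_self
end

section
/- Let σ > 0 and μ ∈ ℝ, and let J be any C² solution of equation (R). Let f ∈ F and let u ∈ U satisfy equation (1.1) with u(t,·) → f in F as t ↘ 0. Then for every t > 0, D^J(u(t,·)) = exp(−t B(J)) · D^J f, where exp denotes the 2×2 matrix exponential. In particular, D^J f = 0 implies D^J(u(t,·)) = 0 for all t > 0. -/
open Set MeasureTheory Filter

/-- derivative within `[0,1]` (one-sided at the boundary). -/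
noncomputable def dxI (f : ℝ → ℝ) (x : ℝ) : ℝ := derivWithin f (Set.Icc 0 1) x

/-- The matrix `B(J)` associated to `J = (J₀, J₁)`. -/
noncomputable def BJ (μ σ : ℝ) (J₀ J₁ : ℝ → ℝ) : Matrix (Fin 2) (Fin 2) ℝ :=
  !![-(2*μ*σ) + (1/2) * dxI J₀ 0, -((1/2) * dxI J₀ 1);
     (1/2) * dxI J₁ 0, 2*μ*σ - (1/2) * dxI J₁ 1]

/-- `J = (J₀,J₁)` is a `C²` solution of the Riccati-type equation (R):
`½ J'' - μ J' + B(J) J = 0` on `[0,1]`, `J(0) = (2σ,0)ᵀ`, `J(1) = (0,2σ)ᵀ`. -/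
def SolvesR (μ σ : ℝ) (J₀ J₁ : ℝ → ℝ) : Prop :=
  (∀ x ∈ Set.Icc (0:ℝ) 1,
    DifferentiableWithinAt ℝ J₀ (Set.Icc 0 1) x ∧
    DifferentiableWithinAt ℝ (dxI J₀) (Set.Icc 0 1) x ∧
    DifferentiableWithinAt ℝ J₁ (Set.Icc 0 1) x ∧
    DifferentiableWithinAt ℝ (dxI J₁) (Set.Icc 0 1) x) ∧
  ContinuousOn (dxI (dxI J₀)) (Set.Icc 0 1) ∧
  ContinuousOn (dxI (dxI J₁)) (Set.Icc 0 1) ∧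
  (∀ x ∈ Set.Icc (0:ℝ) 1,
    (1/2) * dxI (dxI J₀) x - μ * dxI J₀ x
      + BJ μ σ J₀ J₁ 0 0 * J₀ x + BJ μ σ J₀ J₁ 0 1 * J₁ x = 0 ∧
    (1/2) * dxI (dxI J₁) x - μ * dxI J₁ x
      + BJ μ σ J₀ J₁ 1 0 * J₀ x + BJ μ σ J₀ J₁ 1 1 * J₁ x = 0) ∧
  J₀ 0 = 2*σ ∧ J₁ 0 = 0 ∧ J₀ 1 = 0 ∧ J₁ 1 = 2*σ

/-- `m(J) = max(∫₀¹ |J₀|, ∫₀¹ |J₁|)`. -/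
noncomputable def mJ (J₀ J₁ : ℝ → ℝ) : ℝ :=
  max (∫ x in (0:ℝ)..1, |J₀ x|) (∫ x in (0:ℝ)..1, |J₁ x|)

/-- `μ coth μ`, interpreted as `1` at `μ = 0`. -/
noncomputable def muCoth (μ : ℝ) : ℝ :=
  if μ = 0 then 1 else μ * Real.cosh μ / Real.sinh μ

/-- Condition (1.2): `m(J) ≤ 1` if `σ ≥ μ coth μ` and `m(J) < 1` if `σ < μ coth μ`. -/
def Cond12 (μ σ : ℝ) (J₀ J₁ : ℝ → ℝ) : Prop :=
  (muCoth μ ≤ σ → mJ J₀ J₁ ≤ 1) ∧ (σ < muCoth μ → mJ J₀ J₁ < 1)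

/-- `D^J f = (f(0) - ⟨f,J₀⟩, f(1) - ⟨f,J₁⟩)ᵀ`. -/
noncomputable def DJ (J₀ J₁ : ℝ → ℝ) (f : ℝ → ℝ) : Fin 2 → ℝ :=
  ![f 0 - ∫ x in (0:ℝ)..1, f x * J₀ x, f 1 - ∫ x in (0:ℝ)..1, f x * J₁ x]

/-!
Write `v(t) = D^J u(t,·)`. Differentiating under the integral, substituting the equation and
integrating by parts twice (Green's formula for `½ ∂² + μ ∂` against `J`) turns
`∫ ∂ₜu · Jᵢ` into boundary terms plus `∫ u · (½ Jᵢ'' - μ Jᵢ')`. The equation (R) rewrites the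
latter as `-(B(J) ⟨u, J⟩)ᵢ`, and the boundary conditions of `u` and the values `J(0)`, `J(1)` make
the boundary terms combine with `∂ₜu(t,0)`, `∂ₜu(t,1)` so that `v' = -B(J) v`. Hence
`exp(t B(J)) v(t)` is constant on `t > 0`, and dominated convergence identifies the constant with
`D^J f` as `t ↘ 0`.
-/

open Topology Matrix Interval

namespace Matrix

variable {ι : Type*} [Fintype ι] [DecidableEq ι]

theorem hasDerivAt_exp_smul_apply (B : Matrix ι ι ℝ) (t : ℝ) (i j : ι) :
    HasDerivAt (fun s : ℝ => NormedSpace.exp (s • B) i j)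
      ((NormedSpace.exp (t • B) * B) i j) t := by
  open scoped Matrix.Norms.Operator in
  exact (LinearMap.toContinuousLinearMap (entryLinearMap ℝ ℝ i j)).hasFDerivAt.comp_hasDerivAt t
    (hasDerivAt_exp_smul_const B t)

theorem continuous_exp_smul (B : Matrix ι ι ℝ) :
    Continuous fun s : ℝ => NormedSpace.exp (s • B) := by
  open scoped Matrix.Norms.Operator in
  exact NormedSpace.exp_continuous.comp (continuous_id.smul continuous_const)

theorem hasDerivAt_exp_smul_mulVec (B : Matrix ι ι ℝ) {v : ℝ → ι → ℝ} {v' : ι → ℝ} {t : ℝ}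
    (hv : HasDerivAt v v' t) :
    HasDerivAt (fun s => NormedSpace.exp (s • B) *ᵥ v s)
      (NormedSpace.exp (t • B) *ᵥ (B *ᵥ v t + v')) t := by
  refine hasDerivAt_pi.2 fun i => ?_
  have h := HasDerivAt.sum fun j (_ : j ∈ Finset.univ) =>
    (hasDerivAt_exp_smul_apply B t i j).mul (hasDerivAt_pi.1 hv j)
  refine (h.congr_deriv ?_).congr_of_eventuallyEq (Eventually.of_forall fun s => ?_)
  · rw [Finset.sum_add_distrib]
    change ((NormedSpace.exp (t • B) * B) *ᵥ v t) i + (NormedSpace.exp (t • B) *ᵥ v') i = _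
    rw [← mulVec_mulVec, ← Pi.add_apply, ← mulVec_add]
  · simp [mulVec, dotProduct]

/-- Since `d/ds (exp (s • B) *ᵥ v s) = 0`, the product is constant on `s > 0`, and its limit at
`0⁺` is `v₀`. -/
theorem eq_exp_neg_smul_mulVec_of_hasDerivAt (B : Matrix ι ι ℝ) {v : ℝ → ι → ℝ}
    {v₀ : ι → ℝ} (hv : ∀ t ∈ Ioi (0:ℝ), HasDerivAt v (-(B *ᵥ v t)) t)
    (hlim : Tendsto v (𝓝[>] 0) (𝓝 v₀)) {t : ℝ} (ht : 0 < t) :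
    v t = NormedSpace.exp ((-t) • B) *ᵥ v₀ := by
  set w : ℝ → ι → ℝ := fun s => NormedSpace.exp (s • B) *ᵥ v s
  have hw : ∀ s ∈ Ioi (0:ℝ), HasDerivAt w 0 s := fun s hs => by
    simpa using hasDerivAt_exp_smul_mulVec B (hv s hs)
  have hconst : ∀ s ∈ Ioi (0:ℝ), w s = w t := fun s hs =>
    isOpen_Ioi.is_const_of_deriv_eq_zero isPreconnected_Ioi
      (fun r hr => (hw r hr).differentiableAt.differentiableWithinAt)
      (fun r hr => (hw r hr).deriv) hs ht
  have hlimw : Tendsto w (𝓝[>] 0) (𝓝 v₀) := by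
    have hexp : Tendsto (fun s : ℝ => NormedSpace.exp (s • B)) (𝓝[>] 0) (𝓝 1) := by
      simpa using (continuous_exp_smul B).continuousWithinAt (s := Ioi 0) (x := 0) |>.tendsto
    have hmulVec : Tendsto (fun p : Matrix ι ι ℝ × (ι → ℝ) => p.1 *ᵥ p.2) (𝓝 (1, v₀)) (𝓝 v₀) := by
      simpa using (continuous_fst.matrix_mulVec continuous_snd).tendsto ((1 : Matrix ι ι ℝ), v₀)
    exact hmulVec.comp (hexp.prodMk_nhds hlim)
  have hwt : w t = v₀ :=
    tendsto_nhds_unique (tendsto_const_nhds.congr' (eventually_nhdsWithin_of_forall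
      fun s hs => (hconst s hs).symm)) hlimw
  have hinv : NormedSpace.exp ((-t) • B) * NormedSpace.exp (t • B) = 1 := by
    rw [← exp_add_of_commute _ _ (((Commute.refl B).smul_left _).smul_right _),
      ← add_smul, neg_add_cancel, zero_smul, NormedSpace.exp_zero]
  rw [← hwt, mulVec_mulVec, hinv, one_mulVec]

end Matrix

section UnitInterval

lemma aestronglyMeasurable_uIoc_of_continuousOn {g : ℝ → ℝ}
    (hg : ContinuousOn g (Icc 0 1)) : AEStronglyMeasurable g (volume.restrict (Ι (0:ℝ) 1)) :=
  (hg.intervalIntegrable_of_Icc zero_le_one).def'.aestronglyMeasurable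

lemma norm_mul_le_mul_abs_of_abs_le {a b C : ℝ} (ha : |a| ≤ C) : ‖a * b‖ ≤ C * |b| := by
  rw [Real.norm_eq_abs, abs_mul]
  exact mul_le_mul_of_nonneg_right ha (abs_nonneg b)

def IsC2OnUnitIcc (g : ℝ → ℝ) : Prop :=
  (∀ x ∈ Icc (0:ℝ) 1, DifferentiableWithinAt ℝ g (Icc 0 1) x ∧
    DifferentiableWithinAt ℝ (dxI g) (Icc 0 1) x) ∧
  ContinuousOn (dxI (dxI g)) (Icc 0 1)

namespace IsC2OnUnitIcc

variable {g : ℝ → ℝ}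

lemma hasDerivWithinAt (hg : IsC2OnUnitIcc g) {x : ℝ} (hx : x ∈ Icc (0:ℝ) 1) :
    HasDerivWithinAt g (dxI g x) (Icc 0 1) x :=
  (hg.1 x hx).1.hasDerivWithinAt

lemma hasDerivWithinAt_dxI (hg : IsC2OnUnitIcc g) {x : ℝ} (hx : x ∈ Icc (0:ℝ) 1) :
    HasDerivWithinAt (dxI g) (dxI (dxI g) x) (Icc 0 1) x :=
  (hg.1 x hx).2.hasDerivWithinAt

lemma continuousOn (hg : IsC2OnUnitIcc g) : ContinuousOn g (Icc 0 1) :=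
  fun x hx => (hg.1 x hx).1.continuousWithinAt

lemma continuousOn_dxI (hg : IsC2OnUnitIcc g) : ContinuousOn (dxI g) (Icc 0 1) :=
  fun x hx => (hg.1 x hx).2.continuousWithinAt

end IsC2OnUnitIcc

noncomputable def concomitant (μ : ℝ) (g J : ℝ → ℝ) (x : ℝ) : ℝ :=
  (1/2) * (dxI g x * J x - g x * dxI J x) + μ * (g x * J x)

/-- Green's formula for `L = ½ ∂² + μ ∂` and its formal adjoint `L* = ½ ∂² - μ ∂`. -/
theorem integral_green {g J : ℝ → ℝ} (μ : ℝ) (hg : IsC2OnUnitIcc g) (hJ : IsC2OnUnitIcc J) :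
    ∫ x in (0:ℝ)..1, ((1/2) * dxI (dxI g) x + μ * dxI g x) * J x
      = concomitant μ g J 1 - concomitant μ g J 0
        + ∫ x in (0:ℝ)..1, g x * ((1/2) * dxI (dxI J) x - μ * dxI J x) := by
  have hΦ : ∀ x ∈ Icc (0:ℝ) 1, HasDerivWithinAt (concomitant μ g J)
      (((1/2) * dxI (dxI g) x + μ * dxI g x) * J x
        - g x * ((1/2) * dxI (dxI J) x - μ * dxI J x)) (Icc 0 1) x := fun x hx =>
    ((((hg.hasDerivWithinAt_dxI hx).mul (hJ.hasDerivWithinAt hx)).sub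
      ((hg.hasDerivWithinAt hx).mul (hJ.hasDerivWithinAt_dxI hx))).const_mul (1/2) |>.add
      (((hg.hasDerivWithinAt hx).mul (hJ.hasDerivWithinAt hx)).const_mul μ)).congr_deriv
      (by ring)
  have hg₀ := hg.continuousOn; have hg₁ := hg.continuousOn_dxI; have hg₂ := hg.2
  have hJ₀ := hJ.continuousOn; have hJ₁ := hJ.continuousOn_dxI; have hJ₂ := hJ.2
  have hLg : ContinuousOn (fun x => ((1/2) * dxI (dxI g) x + μ * dxI g x) * J x) (Icc 0 1) := by
    fun_prop
  have hLJ : ContinuousOn (fun x => g x * ((1/2) * dxI (dxI J) x - μ * dxI J x)) (Icc 0 1) := by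
    fun_prop
  have hFTC := intervalIntegral.integral_eq_sub_of_hasDerivAt_of_le zero_le_one
    (fun x hx => (hΦ x hx).continuousWithinAt)
    (fun x hx => (hΦ x (Ioo_subset_Icc_self hx)).hasDerivAt (Icc_mem_nhds hx.1 hx.2))
    ((hLg.sub hLJ).intervalIntegrable_of_Icc zero_le_one)
  rw [intervalIntegral.integral_sub (hLg.intervalIntegrable_of_Icc zero_le_one)
    (hLJ.intervalIntegrable_of_Icc zero_le_one)] at hFTC
  linarith

end UnitInterval

lemma px_eq_dxI (u : ℝ → ℝ → ℝ) (t : ℝ) : px u t = dxI (u t) := rfl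

namespace MemU

variable {u : ℝ → ℝ → ℝ} {t : ℝ}

lemma continuousOn_slice (hU : MemU u) (ht : 0 < t) : ContinuousOn (u t) (Icc 0 1) :=
  hU.2.1.uncurry_left t ht

lemma isC2OnUnitIcc_slice (hU : MemU u) (ht : 0 < t) : IsC2OnUnitIcc (u t) :=
  ⟨fun x hx => ⟨(hU.1 t ht x hx).2.1, (hU.1 t ht x hx).2.2⟩,
    hU.2.2.2.2.1.uncurry_left (f := pxx u) t ht⟩

/-- The bound on `∂ₜu` over `[t/2, 2t] × [0,1]` dominates the differentiated integrand. -/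
theorem hasDerivAt_integral_mul (hU : MemU u) {J : ℝ → ℝ} (hJ : ContinuousOn J (Icc 0 1))
    (ht : 0 < t) :
    HasDerivAt (fun s => ∫ x in (0:ℝ)..1, u s x * J x) (∫ x in (0:ℝ)..1, pt u t x * J x) t := by
  obtain ⟨C, hC⟩ := hU.2.2.2.2.2.2 (t/2) (2*t) (by linarith) (by linarith)
  have hpos : ∀ s ∈ Ioo (t/2) (2*t), 0 < s := fun s hs => by linarith [hs.1]
  have hIoc : Ι (0:ℝ) 1 ⊆ Icc 0 1 := by
    rw [uIoc_of_le zero_le_one]; exact Ioc_subset_Icc_self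
  refine (intervalIntegral.hasDerivAt_integral_of_dominated_loc_of_deriv_le
    (F' := fun s x => pt u s x * J x) (bound := fun x => C * |J x|)
    (Ioo_mem_nhds (by linarith) (by linarith))
    (eventually_of_mem (Ioi_mem_nhds ht) fun s hs =>
      aestronglyMeasurable_uIoc_of_continuousOn ((hU.continuousOn_slice hs).mul hJ))
    (((hU.continuousOn_slice ht).mul hJ).intervalIntegrable_of_Icc zero_le_one)
    (aestronglyMeasurable_uIoc_of_continuousOn
      ((hU.2.2.1.uncurry_left (f := pt u) t ht).mul hJ))
    (ae_of_all _ fun x hx s hs => norm_mul_le_mul_abs_of_abs_le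
      (hC s (Ioo_subset_Icc_self hs) x (hIoc hx)).1)
    ((continuousOn_const.mul hJ.abs).intervalIntegrable_of_Icc zero_le_one)
    (ae_of_all _ fun x hx s hs =>
      (hU.1 s (hpos s hs) x (hIoc hx)).1.hasDerivAt.mul_const (J x))).2

end MemU

lemma SatEq.pt_eq_of_mem_Icc {μ σ : ℝ} {u : ℝ → ℝ → ℝ} (hEq : SatEq μ σ u) (hU : MemU u)
    {t : ℝ} (ht : 0 < t) :
    EqOn (pt u t) (fun x => (1/2) * pxx u t x + μ * px u t x) (Icc 0 1) := by
  have hpt : ContinuousOn (pt u t) (Icc 0 1) := hU.2.2.1.uncurry_left (f := pt u) t ht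
  have hpx : ContinuousOn (px u t) (Icc 0 1) := hU.2.2.2.1.uncurry_left (f := px u) t ht
  have hpxx : ContinuousOn (pxx u t) (Icc 0 1) := hU.2.2.2.2.1.uncurry_left (f := pxx u) t ht
  refine EqOn.of_subset_closure (hEq.1 t ht) hpt (by fun_prop) Ioo_subset_Icc_self ?_
  rw [closure_Ioo zero_ne_one]

lemma SatEq.integral_pt_mul {μ σ : ℝ} {u : ℝ → ℝ → ℝ} (hEq : SatEq μ σ u) (hU : MemU u)
    {J : ℝ → ℝ} (hJ : IsC2OnUnitIcc J) {t : ℝ} (ht : 0 < t) :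
    ∫ x in (0:ℝ)..1, pt u t x * J x
      = concomitant μ (u t) J 1 - concomitant μ (u t) J 0
        + ∫ x in (0:ℝ)..1, u t x * ((1/2) * dxI (dxI J) x - μ * dxI J x) := by
  rw [← integral_green μ (hU.isC2OnUnitIcc_slice ht) hJ]
  refine intervalIntegral.integral_congr fun x hx => ?_
  rw [uIcc_of_le zero_le_one] at hx
  rw [hEq.pt_eq_of_mem_Icc hU ht hx]
  rfl

lemma tendsto_integral_mul_of_convF {u : ℝ → ℝ → ℝ} {f J : ℝ → ℝ} (hconv : ConvF u f)
    (hu : ∀ s ∈ Ioi (0:ℝ), ContinuousOn (u s) (Icc 0 1)) (hJ : ContinuousOn J (Icc 0 1)) :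
    Tendsto (fun s => ∫ x in (0:ℝ)..1, u s x * J x) (𝓝[>] 0)
      (𝓝 (∫ x in (0:ℝ)..1, f x * J x)) := by
  obtain ⟨C, hC⟩ := hconv.1
  have hIoc : Ι (0:ℝ) 1 ⊆ Icc 0 1 := by
    rw [uIoc_of_le zero_le_one]; exact Ioc_subset_Icc_self
  exact intervalIntegral.tendsto_integral_filter_of_dominated_convergence (fun x => C * |J x|)
    (eventually_nhdsWithin_of_forall fun s hs =>
      aestronglyMeasurable_uIoc_of_continuousOn ((hu s hs).mul hJ))
    (eventually_of_mem (Ioc_mem_nhdsGT zero_lt_one) fun s hs => ae_of_all _ fun x hx =>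
      norm_mul_le_mul_abs_of_abs_le (hC s hs x (hIoc hx)))
    ((continuousOn_const.mul hJ.abs).intervalIntegrable_of_Icc zero_le_one)
    (ae_of_all _ fun x hx => (hconv.2.1 x (hIoc hx)).mul_const (J x))

namespace SolvesR

variable {μ σ : ℝ} {J₀ J₁ : ℝ → ℝ}

lemma isC2OnUnitIcc_left (hJ : SolvesR μ σ J₀ J₁) : IsC2OnUnitIcc J₀ :=
  ⟨fun x hx => ⟨(hJ.1 x hx).1, (hJ.1 x hx).2.1⟩, hJ.2.1⟩

lemma isC2OnUnitIcc_right (hJ : SolvesR μ σ J₀ J₁) : IsC2OnUnitIcc J₁ :=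
  ⟨fun x hx => ⟨(hJ.1 x hx).2.2.1, (hJ.1 x hx).2.2.2⟩, hJ.2.2.1⟩

lemma integral_mul_adjoint (hJ : SolvesR μ σ J₀ J₁) {g : ℝ → ℝ} (hg : ContinuousOn g (Icc 0 1)) :
    (∫ x in (0:ℝ)..1, g x * ((1/2) * dxI (dxI J₀) x - μ * dxI J₀ x))
        = -(BJ μ σ J₀ J₁ 0 0 * (∫ x in (0:ℝ)..1, g x * J₀ x)
          + BJ μ σ J₀ J₁ 0 1 * ∫ x in (0:ℝ)..1, g x * J₁ x) ∧
      (∫ x in (0:ℝ)..1, g x * ((1/2) * dxI (dxI J₁) x - μ * dxI J₁ x))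
        = -(BJ μ σ J₀ J₁ 1 0 * (∫ x in (0:ℝ)..1, g x * J₀ x)
          + BJ μ σ J₀ J₁ 1 1 * ∫ x in (0:ℝ)..1, g x * J₁ x) := by
  have hi₀ : IntervalIntegrable (fun x => g x * J₀ x) volume 0 1 :=
    (hg.mul hJ.isC2OnUnitIcc_left.continuousOn).intervalIntegrable_of_Icc zero_le_one
  have hi₁ : IntervalIntegrable (fun x => g x * J₁ x) volume 0 1 :=
    (hg.mul hJ.isC2OnUnitIcc_right.continuousOn).intervalIntegrable_of_Icc zero_le_one
  have hrow : ∀ (φ : ℝ → ℝ) (a b : ℝ),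
      (∀ x ∈ Icc (0:ℝ) 1, φ x + a * J₀ x + b * J₁ x = 0) →
      ∫ x in (0:ℝ)..1, g x * φ x
        = -(a * (∫ x in (0:ℝ)..1, g x * J₀ x) + b * ∫ x in (0:ℝ)..1, g x * J₁ x) := by
    intro φ a b hφ
    rw [← intervalIntegral.integral_const_mul, ← intervalIntegral.integral_const_mul,
      ← intervalIntegral.integral_add (hi₀.const_mul a) (hi₁.const_mul b),
      ← intervalIntegral.integral_neg]
    refine intervalIntegral.integral_congr fun x hx => ?_
    rw [uIcc_of_le zero_le_one] at hx
    linear_combination g x * hφ x hx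
  exact ⟨hrow _ _ _ fun x hx => by linear_combination (hJ.2.2.2.1 x hx).1,
    hrow _ _ _ fun x hx => by linear_combination (hJ.2.2.2.1 x hx).2⟩

end SolvesR

section DJ

variable {μ σ : ℝ} {J₀ J₁ f : ℝ → ℝ} {u : ℝ → ℝ → ℝ}

theorem tendsto_DJ (hU : MemU u) (hconv : ConvF u f) (hJ₀ : ContinuousOn J₀ (Icc 0 1))
    (hJ₁ : ContinuousOn J₁ (Icc 0 1)) :
    Tendsto (fun s => DJ J₀ J₁ (fun x => u s x)) (𝓝[>] 0) (𝓝 (DJ J₀ J₁ f)) := by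
  have hu : ∀ s ∈ Ioi (0:ℝ), ContinuousOn (u s) (Icc 0 1) := fun s hs => hU.continuousOn_slice hs
  refine tendsto_pi_nhds.2 (Fin.forall_fin_two.2 ⟨?_, ?_⟩)
  · exact (hconv.2.1 0 (left_mem_Icc.2 zero_le_one)).sub
      (tendsto_integral_mul_of_convF hconv hu hJ₀)
  · exact (hconv.2.1 1 (right_mem_Icc.2 zero_le_one)).sub
      (tendsto_integral_mul_of_convF hconv hu hJ₁)

theorem hasDerivAt_DJ (hJ : SolvesR μ σ J₀ J₁) (hU : MemU u) (hEq : SatEq μ σ u) {t : ℝ}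
    (ht : 0 < t) :
    HasDerivAt (fun s => DJ J₀ J₁ (fun x => u s x))
      (-(BJ μ σ J₀ J₁ *ᵥ DJ J₀ J₁ (fun x => u t x))) t := by
  have hJ₀ := hJ.isC2OnUnitIcc_left
  have hJ₁ := hJ.isC2OnUnitIcc_right
  obtain ⟨hadj₀, hadj₁⟩ := hJ.integral_mul_adjoint (hU.continuousOn_slice ht)
  obtain ⟨-, -, -, -, hJ₀0, hJ₁0, hJ₀1, hJ₁1⟩ := hJ
  have hderiv : ∀ {a : ℝ} {J : ℝ → ℝ}, a ∈ Icc (0:ℝ) 1 → ContinuousOn J (Icc 0 1) →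
      HasDerivAt (fun s => u s a - ∫ x in (0:ℝ)..1, u s x * J x)
        (pt u t a - ∫ x in (0:ℝ)..1, pt u t x * J x) t := fun ha hJ =>
    (hU.1 t ht _ ha).1.hasDerivAt.sub (hU.hasDerivAt_integral_mul hJ ht)
  refine hasDerivAt_pi.2 (Fin.forall_fin_two.2 ⟨?_, ?_⟩)
  · refine (hderiv (left_mem_Icc.2 zero_le_one) hJ₀.continuousOn).congr_deriv ?_
    rw [(hEq.2 t ht).1, hEq.integral_pt_mul hU hJ₀ ht, hadj₀]
    simp only [concomitant, hJ₀0, hJ₀1, px_eq_dxI, Pi.neg_apply, mulVec, dotProduct,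
      Fin.sum_univ_two, DJ, BJ, of_apply, cons_val_zero, cons_val_one]
    ring
  · refine (hderiv (right_mem_Icc.2 zero_le_one) hJ₁.continuousOn).congr_deriv ?_
    rw [(hEq.2 t ht).2, hEq.integral_pt_mul hU hJ₁ ht, hadj₁]
    simp only [concomitant, hJ₁0, hJ₁1, px_eq_dxI, Pi.neg_apply, mulVec, dotProduct,
      Fin.sum_univ_two, DJ, BJ, of_apply, cons_val_zero, cons_val_one]
    ring

end DJ

theorem stmt7_general (μ σ : ℝ) (J₀ J₁ : ℝ → ℝ)
    (hJ : SolvesR μ σ J₀ J₁)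
    (f : ℝ → ℝ) (u : ℝ → ℝ → ℝ)
    (hU : MemU u) (hEq : SatEq μ σ u) (hconv : ConvF u f) :
    (∀ t ∈ Set.Ioi (0:ℝ),
      DJ J₀ J₁ (fun x => u t x) =
        (NormedSpace.exp ((-t) • BJ μ σ J₀ J₁)).mulVec (DJ J₀ J₁ f)) ∧
    (DJ J₀ J₁ f = 0 → ∀ t ∈ Set.Ioi (0:ℝ), DJ J₀ J₁ (fun x => u t x) = 0) := by
  have hevol : ∀ t ∈ Ioi (0:ℝ), DJ J₀ J₁ (fun x => u t x)
      = NormedSpace.exp ((-t) • BJ μ σ J₀ J₁) *ᵥ DJ J₀ J₁ f := fun t ht =>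
    Matrix.eq_exp_neg_smul_mulVec_of_hasDerivAt _ (fun s hs => hasDerivAt_DJ hJ hU hEq hs)
      (tendsto_DJ hU hconv hJ.isC2OnUnitIcc_left.continuousOn
        hJ.isC2OnUnitIcc_right.continuousOn) ht
  exact ⟨hevol, fun h0 t ht => by rw [hevol t ht, h0, mulVec_zero]⟩

/-- Theorem 2.1, evolution of `D^J`: for any `C²` solution `J` of (R) and any
solution `u` of (1.1) with initial data `f ∈ F`, `D^J u(t,·) = e^{-tB(J)} D^J f`; in
particular `D^J f = 0` implies `D^J u(t,·) = 0` for all `t > 0`. -/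
theorem stmt7 (μ σ : ℝ) (hσ : 0 < σ) (J₀ J₁ : ℝ → ℝ)
    (hJ : SolvesR μ σ J₀ J₁)
    (f : ℝ → ℝ) (hf : MemF f) (u : ℝ → ℝ → ℝ)
    (hU : MemU u) (hEq : SatEq μ σ u) (hconv : ConvF u f) :
    (∀ t ∈ Set.Ioi (0:ℝ),
      DJ J₀ J₁ (fun x => u t x) =
        (NormedSpace.exp ((-t) • BJ μ σ J₀ J₁)).mulVec (DJ J₀ J₁ f)) ∧
    (DJ J₀ J₁ f = 0 → ∀ t ∈ Set.Ioi (0:ℝ), DJ J₀ J₁ (fun x => u t x) = 0) :=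
  stmt7_general μ σ J₀ J₁ hJ f u hU hEq hconv
end
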